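/- arXiv:1507.08939 — 2 statements merged into one kernel-verified Lean document; each statement's English description precedes it below -/
import Mathlib

section
/- If x, y, z are nonnegative reals with x + y + z = 3 and one of x, y, z equals 0 (say z = 0, so x + y = 3), then Q(x,y,z) = q(x,y)² + q(y,z)² + q(z,x)² > 0; that is, the three polynomials q(x,y), q(y,0), q(0,x) have no simultaneous zero on the edge z = 0 of the simplex. -/
noncomputable def q (x y : ℝ) : ℝ :=
  2 - (14/3) * (x + y) + (205/18) * (x * y) + x^2 + y^2 - (7/3) * (x^2 * y - x * y^2)

noncomputable def Q (x y z : ℝ) : ℝ := q x y ^ 2 + q y z ^ 2 + q z x ^ 2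

theorem Q_pos_on_edge (x y : ℝ) (hx : 0 ≤ x) (hy : 0 ≤ y) (hxy : x + y = 3) :
    0 < Q x y 0 := by
  have hx' : x = 3 - y := by linarith
  subst hx'
  simp only [Q, q]
  nlinarith [sq_nonneg (q (3-y) y), sq_nonneg (y^2 - (14/3)*y + 2 - (y^2 - (4/3)*y - 3)),
    sq_nonneg (y^2 - (14/3)*y + 2), sq_nonneg (y^2 - (4/3)*y - 3),
    sq_nonneg ((y^2 - (14/3)*y + 2) + (y^2 - (4/3)*y - 3)), sq_nonneg (2*y-3)]
end

section
/- The function Q(x,y,z) = q(x,y)² + q(y,z)² + q(z,x)² is strictly positive at every point of the simplex σ = {(x,y,z) ∈ ℝ³ : x + y + z = 3, x,y,z ≥ 0}. -/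
set_option maxHeartbeats 1000000

theorem Q_pos_on_simplex (x y z : ℝ) (hx : 0 ≤ x) (hy : 0 ≤ y) (hz : 0 ≤ z)
    (hsum : x + y + z = 3) : 0 < Q x y z := by
  by_contra h
  push_neg at h
  simp only [Q] at h
  have h1 : q x y = 0 := by nlinarith [sq_nonneg (q x y), sq_nonneg (q y z), sq_nonneg (q z x)]
  have h2 : q y z = 0 := by nlinarith [sq_nonneg (q x y), sq_nonneg (q y z), sq_nonneg (q z x)]
  have h3 : q z x = 0 := by nlinarith [sq_nonneg (q x y), sq_nonneg (q y z), sq_nonneg (q z x)]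
  simp only [q] at h1 h2 h3
  have hz' : z = 3 - x - y := by linarith
  subst hz'
  have contra : (1:ℝ) = 0 := by
    linear_combination ((12075898136/7338829935 : ℝ) + (-399551307211/105679151064 : ℝ)*y + (1911817716893/528395755320 : ℝ)*y^2 + (-117844076203/88065959220 : ℝ)*y^3 + (397163473/2446276645 : ℝ)*y^4 + (5068224469/3570241590 : ℝ)*x + (-544068543319/528395755320 : ℝ)*x*y + (-10836889049/29355319740 : ℝ)*x*y^2 + (397163473/2446276645 : ℝ)*x*y^3 + (-26906270741/44032979610 : ℝ)*x^2 + (10609938493/22016489805 : ℝ)*x^2*y) * h1 + ((3305588828/22016489805 : ℝ) + (-3459514891/7338829935 : ℝ)*y + (1596759269/5871063948 : ℝ)*y^2 + (-16911494593/132098938830 : ℝ)*x + (50472182579/58710639480 : ℝ)*x*y + (-3460995979/9785106580 : ℝ)*x*y^2 + (-397163473/2446276645 : ℝ)*x*y^3 + (9162656909/44032979610 : ℝ)*x^2) * h2 + ((365064257/595040265 : ℝ) + (-639566815433/264197877660 : ℝ)*y + (159494777869/264197877660 : ℝ)*y^2 + (53730544133/88065959220 : ℝ)*y^3 + (-397163473/2446276645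 : ℝ)*y^4 + (-1937922/22442905 : ℝ)*x + (11290790161/22016489805 : ℝ)*x*y + (-10609938493/44032979610 : ℝ)*x*y^2) * h3
  norm_num at contra
end
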